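/- Let n ≥ 1 be an integer and let N > 9n be an integer. Set a := 2^(2n) − 2^n + 1 and b := (2^N + 1)·(2^(7n) + 2^(6n) − 2^(4n) − 2^(3n) + 2^n + 1). Then a and b are odd, s(a) = n + 1, s(b) = 2(3n + 2), and s(ab) = 4. -/

import Mathlib

/-!
Put `x = 2 ^ n`. The second factor `c = x^7 + x^6 - x^4 - x^3 + x + 1` of `b` is
`(x + 1)(x^6 - x^3 + 1)`, so two applications of the sum-of-cubes identity give `a c = x^9 + 1`.
Binary digit sums add over numbers whose bits do not overlap: `s (u + 2^k v) = s u + s v` for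
`u < 2^k`. Now `a = (2^(2n) - 2^n) + 1` and
`c = 2^(7n) + (2^(6n) - 2^(4n+1)) + (2^(4n) - 2^(3n)) + 2^n + 1` are sums of disjoint blocks of
ones, and since `c ≤ a c = x^9 + 1 < 2^N`, both `b = 2^N c + c` and `a b = 2^N (x^9 + 1) + (x^9 + 1)`
are two non-overlapping copies of a number.
-/

def s (n : ℕ) : ℕ := (Nat.digits 2 n).count 1

lemma s_one : s 1 = 1 := by simp [s]

lemma s_add_two_pow_mul {k u : ℕ} (v : ℕ) (hu : u < 2 ^ k) :
    s (u + 2 ^ k * v) = s u + s v := by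
  rcases Nat.eq_zero_or_pos v with rfl | hv
  · simp [s]
  obtain ⟨j, hj⟩ := Nat.exists_eq_add_of_le ((Nat.digits_length_le_iff one_lt_two u).mpr hu)
  rw [s, s, s, hj, ← Nat.digits_append_zeroes_append_digits one_lt_two hv]
  simp [List.count_replicate]

lemma s_two_pow_add {k u : ℕ} (hu : u < 2 ^ k) : s (2 ^ k + u) = s u + 1 := by
  simpa [add_comm, s_one] using s_add_two_pow_mul 1 hu

lemma s_two_pow_add_one_mul {k u : ℕ} (hu : u < 2 ^ k) : s ((2 ^ k + 1) * u) = 2 * s u := by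
  rw [add_one_mul, add_comm, s_add_two_pow_mul _ hu, two_mul]

lemma s_two_pow_sub_one (k : ℕ) : s (2 ^ k - 1) = k := by
  induction k with
  | zero => simp [s]
  | succ k ih =>
    have h : 2 ^ (k + 1) - 1 = 1 + 2 ^ 1 * (2 ^ k - 1) := by
      have := Nat.one_le_two_pow (n := k)
      rw [pow_succ]
      omega
    rw [h, s_add_two_pow_mul _ (by norm_num), s_one, ih, add_comm]

lemma s_two_pow_sub_two_pow_add {i j u : ℕ} (hij : i ≤ j) (hu : u < 2 ^ i) :
    s (2 ^ j - 2 ^ i + u) = j - i + s u := by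
  have h : 2 ^ j - 2 ^ i + u = u + 2 ^ i * (2 ^ (j - i) - 1) := by
    rw [Nat.mul_sub_one, ← pow_add, Nat.add_sub_cancel' hij, add_comm]
  rw [h, s_add_two_pow_mul _ hu, s_two_pow_sub_one, add_comm]

lemma two_pow_sub_two_pow_add_lt {i j k u : ℕ} (hij : i ≤ j) (hjk : j ≤ k) (hu : u < 2 ^ i) :
    2 ^ j - 2 ^ i + u < 2 ^ k := by
  have := Nat.pow_le_pow_right two_pos hij
  have := Nat.pow_le_pow_right two_pos hjk
  omega

lemma two_pow_add_one_lt_two_pow {i j : ℕ} (hi : i ≠ 0) (hij : i < j) : 2 ^ i + 1 < 2 ^ j := by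
  have := Nat.pow_le_pow_right two_pos hij
  have := Nat.one_lt_two_pow hi
  rw [pow_succ] at *
  omega

lemma odd_two_pow_add_one {k : ℕ} (hk : k ≠ 0) : Odd (2 ^ k + 1) :=
  (Nat.even_pow.mpr ⟨even_two, hk⟩).add_one

lemma sq_sub_self_add_one_mul_add_one (y : ℕ) : (y ^ 2 - y + 1) * (y + 1) = y ^ 3 + 1 := by
  have : y ≤ y ^ 2 := Nat.le_self_pow two_ne_zero y
  zify [this]
  ring

def cofactor (n : ℕ) : ℕ := 2 ^ (7 * n) + 2 ^ (6 * n) - 2 ^ (4 * n) - 2 ^ (3 * n) + 2 ^ n + 1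

lemma cofactor_eq_mul (n : ℕ) : cofactor n = (2 ^ n + 1) * (2 ^ (6 * n) - 2 ^ (3 * n) + 1) := by
  simp only [cofactor, pow_mul']
  set x := 2 ^ n
  have h36 : x ^ 3 ≤ x ^ 6 := Nat.pow_le_pow_right Nat.one_le_two_pow (by norm_num)
  have h47 : x ^ 4 ≤ x ^ 7 := Nat.pow_le_pow_right Nat.one_le_two_pow (by norm_num)
  have h : x ^ 4 ≤ x ^ 7 + x ^ 6 := by omega
  have h' : x ^ 3 ≤ x ^ 7 + x ^ 6 - x ^ 4 := by omega
  zify [h36, h, h']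
  ring

lemma mul_cofactor (n : ℕ) : (2 ^ (2 * n) - 2 ^ n + 1) * cofactor n = 2 ^ (9 * n) + 1 := by
  have h6 : 2 ^ (6 * n) = (2 ^ (3 * n)) ^ 2 := by rw [← pow_mul]; ring_nf
  calc (2 ^ (2 * n) - 2 ^ n + 1) * cofactor n
      = ((2 ^ n) ^ 2 - 2 ^ n + 1) * (2 ^ n + 1) * ((2 ^ (3 * n)) ^ 2 - 2 ^ (3 * n) + 1) := by
        rw [cofactor_eq_mul, h6, ← mul_assoc, pow_mul']
    _ = ((2 ^ (3 * n)) ^ 2 - 2 ^ (3 * n) + 1) * (2 ^ (3 * n) + 1) := by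
        rw [sq_sub_self_add_one_mul_add_one, ← pow_mul', mul_comm]
    _ = 2 ^ (9 * n) + 1 := by
        rw [sq_sub_self_add_one_mul_add_one, ← pow_mul]; ring_nf

lemma cofactor_eq_blocks {n : ℕ} (hn : 1 ≤ n) : cofactor n =
    2 ^ (7 * n) + (2 ^ (6 * n) - 2 ^ (4 * n + 1) + (2 ^ (4 * n) - 2 ^ (3 * n) + (2 ^ n + 1))) := by
  have h4 : 2 ^ (4 * n + 1) ≤ 2 ^ (6 * n) := Nat.pow_le_pow_right two_pos (by omega)
  have h3 : 2 ^ (3 * n) ≤ 2 ^ (4 * n) := Nat.pow_le_pow_right two_pos (by omega)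
  simp only [cofactor, pow_succ, pow_mul'] at h3 h4 ⊢
  omega

lemma s_cofactor {n : ℕ} (hn : 1 ≤ n) : s (cofactor n) = 3 * n + 2 := by
  have h1 : 1 < 2 ^ n := Nat.one_lt_two_pow (by omega)
  have h2 : 2 ^ n + 1 < 2 ^ (3 * n) := two_pow_add_one_lt_two_pow (by omega) (by omega)
  have h3 : _ < 2 ^ (4 * n + 1) := two_pow_sub_two_pow_add_lt (j := 4 * n) (by omega) (by omega) h2
  have h4 : _ < 2 ^ (7 * n) := two_pow_sub_two_pow_add_lt (j := 6 * n) (by omega) (by omega) h3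
  rw [cofactor_eq_blocks hn, s_two_pow_add h4, s_two_pow_sub_two_pow_add (by omega) h3,
    s_two_pow_sub_two_pow_add (by omega) h2, s_two_pow_add h1, s_one]
  omega

theorem construction_k4 (n N : ℕ) (hn : 1 ≤ n) (hN : 9 * n < N)
    (a b : ℕ)
    (ha : a = 2 ^ (2 * n) - 2 ^ n + 1)
    (hb : b = (2 ^ N + 1) *
      (2 ^ (7 * n) + 2 ^ (6 * n) - 2 ^ (4 * n) - 2 ^ (3 * n) + 2 ^ n + 1)) :
    Odd a ∧ Odd b ∧ s a = n + 1 ∧ s b = 2 * (3 * n + 2) ∧ s (a * b) = 4 := by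
  change b = (2 ^ N + 1) * cofactor n at hb
  have hab : a * b = (2 ^ N + 1) * (2 ^ (9 * n) + 1) := by
    rw [ha, hb, mul_left_comm, mul_cofactor]
  have h9N : 2 ^ (9 * n) + 1 < 2 ^ N := two_pow_add_one_lt_two_pow (by omega) hN
  have hCN : cofactor n < 2 ^ N := calc
    cofactor n ≤ (2 ^ (2 * n) - 2 ^ n + 1) * cofactor n := Nat.le_mul_of_pos_left _ (by omega)
    _ < 2 ^ N := mul_cofactor n ▸ h9N
  obtain ⟨hodd_a, hodd_b⟩ := Nat.odd_mul.mp <| hab ▸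
    (odd_two_pow_add_one (by omega)).mul (odd_two_pow_add_one (by omega))
  refine ⟨hodd_a, hodd_b, ?_, ?_, ?_⟩
  · rw [ha, s_two_pow_sub_two_pow_add (by omega) (Nat.one_lt_two_pow (by omega)), s_one]
    omega
  · rw [hb, s_two_pow_add_one_mul hCN, s_cofactor hn]
  · rw [hab, s_two_pow_add_one_mul h9N, s_two_pow_add (Nat.one_lt_two_pow (by omega)), s_one]
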